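/- arXiv:2106.03163 — 3 statements merged into one kernel-verified Lean document; each statement's English description precedes it below -/
import Mathlib

section
/- Let D ⊆ D⁺ ⊆ ℝ with D nonempty and sup D⁺ finite. Then for every function T : ℝⁿ → ℝ, every sample x ∈ Dⁿ, and every α ∈ (0,1), the upper confidence bound computed with D is at most the one computed with D⁺: b^α_{D,T}(x) ≤ b^α_{D⁺,T}(x). -/
/-! A quantile is monotone under almost-sure domination, provided the level lies in `(0, 1]`
and the variables are a.s. bounded from the relevant sides (so that the defining `sInf` is not
a junk value). For weights `u ∈ [0,1]ⁿ`, enlarging `D` to `D⁺` enlarges the feasible set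
`S_{D,T}(x)` and raises the top value `sup D`, and `m(z, u)` is nondecreasing in that top value
because the largest weight is at most `1`; hence `b_{D,T}(x, u) ≤ b_{D⁺,T}(x, u)` on the unit
cube, which carries all the mass of the uniform law. -/

open MeasureTheory Set

/-- The sorted rearrangement (order statistics) of a finite real vector:
`sortedVec x i` is the (i+1)-st order statistic `x_{(i+1)}` (0-indexed). -/
noncomputable def sortedVec {n : ℕ} (x : Fin n → ℝ) : Fin n → ℝ :=
  x ∘ ⇑(Tuple.sort x)

/-- The induced mean `m(x, ℓ) = s - ∑ ℓ_{(i)} (x_{(i+1)} - x_{(i)})`, with `x_{(n+1)} := s`. -/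
noncomputable def inducedMean {n : ℕ} (s : ℝ) (x ℓ : Fin n → ℝ) : ℝ :=
  s - ∑ i : Fin n, sortedVec ℓ i * ((Fin.snoc (sortedVec x) s : Fin (n+1) → ℝ) i.succ - sortedVec x i)

/-- `S_{D,T}(x) = {y ∈ Dⁿ : T y ≤ T x}`. -/
def SsetD {n : ℕ} (D : Set ℝ) (T : (Fin n → ℝ) → ℝ) (x : Fin n → ℝ) : Set (Fin n → ℝ) :=
  {y | (∀ i, y i ∈ D) ∧ T y ≤ T x}

/-- `b_{D,T}(x, u) = sup_{z ∈ S_{D,T}(x)} m_{sup D}(z, u)`. -/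
noncomputable def bfun {n : ℕ} (D : Set ℝ) (T : (Fin n → ℝ) → ℝ) (x u : Fin n → ℝ) : ℝ :=
  sSup ((fun z => inducedMean (sSup D) z u) '' SsetD D T x)

/-- The uniform probability measure on `[0,1]`. -/
noncomputable def unif01 : Measure ℝ := volume.restrict (Icc (0:ℝ) 1)

/-- The law of an i.i.d. sample of size `n` from Uniform(0,1). -/
noncomputable def unifPi (n : ℕ) : Measure (Fin n → ℝ) := Measure.pi fun _ => unif01

/-- The `p`-quantile of the random variable `Y` under `μ`:
`Q(p, Y) = inf {y : P(Y ≤ y) ≥ p}`. -/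
noncomputable def rquantile {Ω : Type*} [MeasurableSpace Ω] (μ : Measure Ω)
    (Y : Ω → ℝ) (p : ℝ) : ℝ :=
  sInf {y : ℝ | ENNReal.ofReal p ≤ μ {ω | Y ω ≤ y}}

/-- The upper confidence bound `b^α_{D,T}(x) = Q(1 - α, b_{D,T}(x, U))`, `U` i.i.d. Uniform(0,1). -/
noncomputable def ucb {n : ℕ} (D : Set ℝ) (T : (Fin n → ℝ) → ℝ) (α : ℝ)
    (x : Fin n → ℝ) : ℝ :=
  rquantile (unifPi n) (bfun D T x) (1 - α)

/-- The stairstep function `G_{x,ℓ}` with top value at `s`. -/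
noncomputable def stairstep {n : ℕ} (s : ℝ) (x ℓ : Fin n → ℝ) (t : ℝ) : ℝ :=
  if s ≤ t then 1 else sSup ({0} ∪ (sortedVec ℓ '' {i | sortedVec x i ≤ t}))

/-- The `k`-th smallest value (1-indexed) among `m 0, …, m (L-1)`. -/
noncomputable def kthSmallest {L : ℕ} (m : Fin L → ℝ) (k : ℕ) : ℝ :=
  sInf {y : ℝ | k ≤ Nat.card {j : Fin L // m j ≤ y}}

lemma rquantile_mono_of_ae_le {Ω : Type*} [MeasurableSpace Ω] {μ : Measure Ω}
    [IsProbabilityMeasure μ] {Y Y' : Ω → ℝ} {p c C : ℝ} (hp : 0 < p) (hp1 : p ≤ 1)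
    (hYc : ∀ᵐ ω ∂μ, c ≤ Y ω) (hY'C : ∀ᵐ ω ∂μ, Y' ω ≤ C) (hYY' : Y ≤ᵐ[μ] Y') :
    rquantile μ Y p ≤ rquantile μ Y' p := by
  refine csInf_le_csInf ⟨c, fun y hy => ?_⟩ ⟨C, ?_⟩ fun y hy => ?_
  · by_contra! hyc
    have hnull : μ {ω | Y ω ≤ y} = 0 :=
      measure_mono_null (fun ω (hω : Y ω ≤ y) => not_le.2 (hω.trans_lt hyc)) (ae_iff.1 hYc)
    exact (ENNReal.ofReal_pos.2 hp).not_ge (hnull ▸ hy)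
  · calc ENNReal.ofReal p ≤ μ univ := by simpa using hp1
      _ ≤ μ {ω | Y' ω ≤ C} := measure_mono_ae (hY'C.mono fun ω h _ => h)
  · exact hy.trans (measure_mono_ae (hYY'.mono fun ω h (h' : Y' ω ≤ y) => h.trans h'))

instance : IsProbabilityMeasure unif01 :=
  ⟨by simp [unif01, Real.volume_Icc]⟩

instance (n : ℕ) : IsProbabilityMeasure (unifPi n) := by
  unfold unifPi; infer_instance

lemma ae_unifPi_mem_Icc (n : ℕ) : ∀ᵐ u ∂unifPi n, ∀ i, u i ∈ Icc (0 : ℝ) 1 :=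
  ae_all_iff.2 fun _ => Measure.tendsto_eval_ae_ae.eventually (ae_restrict_mem measurableSet_Icc)

lemma sortedVec_le_snoc_succ {n : ℕ} {s : ℝ} {z : Fin n → ℝ} (hz : ∀ i, z i ≤ s) (i : Fin n) :
    sortedVec z i ≤ (Fin.snoc (sortedVec z) s : Fin (n + 1) → ℝ) i.succ := by
  cases n with
  | zero => exact i.elim0
  | succ m =>
    induction i using Fin.lastCases with
    | last =>
      rw [Fin.succ_last, Fin.snoc_last]
      exact hz _
    | cast j =>
      rw [Fin.succ_castSucc, Fin.snoc_castSucc]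
      exact Tuple.monotone_sort z (Fin.castSucc_le_succ j)

lemma inducedMean_le {n : ℕ} {s : ℝ} {z u : Fin n → ℝ} (hz : ∀ i, z i ≤ s)
    (hu : ∀ i, 0 ≤ u i) : inducedMean s z u ≤ s :=
  sub_le_self _ <| Finset.sum_nonneg fun i _ =>
    mul_nonneg (hu _) (sub_nonneg.2 (sortedVec_le_snoc_succ hz i))

lemma inducedMean_one_le {n : ℕ} {s : ℝ} {z u : Fin n → ℝ} (hz : ∀ i, z i ≤ s)
    (hu : ∀ i, u i ≤ 1) : inducedMean s z 1 ≤ inducedMean s z u := by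
  refine sub_le_sub_left (Finset.sum_le_sum fun i _ => ?_) s
  have hgap := sub_nonneg.2 (sortedVec_le_snoc_succ hz i)
  simpa [sortedVec] using mul_le_mul_of_nonneg_right (hu _) hgap

lemma inducedMean_mono_left {n : ℕ} {s s' : ℝ} {z u : Fin n → ℝ} (hss' : s ≤ s')
    (hu : ∀ i, u i ≤ 1) : inducedMean s z u ≤ inducedMean s' z u := by
  cases n with
  | zero => simpa [inducedMean] using hss'
  | succ m =>
    -- only the last gap `s - z_{(n)}` depends on `s`, with weight `ℓ_{(n)} ≤ 1`
    simp only [inducedMean, Fin.sum_univ_castSucc, Fin.succ_castSucc, Fin.snoc_castSucc,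
      Fin.succ_last, Fin.snoc_last]
    nlinarith [show sortedVec u (Fin.last m) ≤ 1 from hu _]

section bfun

variable {n : ℕ} {D Dp : Set ℝ} {T : (Fin n → ℝ) → ℝ} {x u : Fin n → ℝ}

lemma mem_SsetD_self (hx : ∀ i, x i ∈ D) : x ∈ SsetD D T x :=
  ⟨hx, le_rfl⟩

lemma SsetD_mono (hsub : D ⊆ Dp) : SsetD D T x ⊆ SsetD Dp T x :=
  fun _ hz => ⟨fun i => hsub (hz.1 i), hz.2⟩

lemma sSup_mem_upperBounds_inducedMean_image (hD : BddAbove D) (hu : ∀ i, 0 ≤ u i) :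
    sSup D ∈ upperBounds ((fun z => inducedMean (sSup D) z u) '' SsetD D T x) :=
  forall_mem_image.2 fun _ hz => inducedMean_le (fun i => le_csSup hD (hz.1 i)) hu

lemma inducedMean_le_bfun (hD : BddAbove D) (hu : ∀ i, 0 ≤ u i) {z : Fin n → ℝ}
    (hz : z ∈ SsetD D T x) : inducedMean (sSup D) z u ≤ bfun D T x u :=
  le_csSup ⟨sSup D, sSup_mem_upperBounds_inducedMean_image hD hu⟩ (mem_image_of_mem _ hz)

lemma bfun_le_sSup (hD : BddAbove D) (hS : (SsetD D T x).Nonempty) (hu : ∀ i, 0 ≤ u i) :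
    bfun D T x u ≤ sSup D :=
  csSup_le (hS.image _) (sSup_mem_upperBounds_inducedMean_image hD hu)

lemma bfun_mono (hD : D.Nonempty) (hsub : D ⊆ Dp) (hDp : BddAbove Dp)
    (hS : (SsetD D T x).Nonempty) (hu : ∀ i, u i ∈ Icc (0 : ℝ) 1) :
    bfun D T x u ≤ bfun Dp T x u :=
  csSup_le (hS.image _) <| forall_mem_image.2 fun _ hz =>
    (inducedMean_mono_left (csSup_le_csSup hDp hD hsub) fun i => (hu i).2).trans
      (inducedMean_le_bfun hDp (fun i => (hu i).1) (SsetD_mono hsub hz))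

end bfun

/-- a UCB computed from a superset `D⁺ ⊇ D` (with finite supremum)
is at least the UCB computed from `D`. -/
theorem stmt0 {n : ℕ} (D Dp : Set ℝ) (hD : D.Nonempty) (hsub : D ⊆ Dp)
    (hbdd : BddAbove Dp) :
    ∀ (T : (Fin n → ℝ) → ℝ) (x : Fin n → ℝ), (∀ i, x i ∈ D) →
      ∀ α : ℝ, α ∈ Set.Ioo (0:ℝ) 1 → ucb D T α x ≤ ucb Dp T α x := by
  intro T x hx α hα
  have hxS : x ∈ SsetD D T x := mem_SsetD_self hx
  have hcube := ae_unifPi_mem_Icc n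
  refine rquantile_mono_of_ae_le (c := inducedMean (sSup D) x 1) (C := sSup Dp)
    (by linarith [hα.2]) (by linarith [hα.1]) ?_ ?_ ?_
  · filter_upwards [hcube] with u hu
    exact (inducedMean_one_le (fun i => le_csSup (hbdd.mono hsub) (hx i)) fun i => (hu i).2).trans
      (inducedMean_le_bfun (hbdd.mono hsub) (fun i => (hu i).1) hxS)
  · filter_upwards [hcube] with u hu
    exact bfun_le_sSup hbdd ⟨x, SsetD_mono hsub hxS⟩ fun i => (hu i).1
  · filter_upwards [hcube] with u hu
    exact bfun_mono hD hsub hbdd ⟨x, hxS⟩ hu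
end

section
/- Let s ∈ ℝ, let x ∈ ℝⁿ with order statistics x_{(1)} ≤ … ≤ x_{(n)} ≤ s and x_{(n+1)} := s, and let ℓ ∈ [0,1]ⁿ with order statistics ℓ_{(1)} ≤ … ≤ ℓ_{(n)}. Let X be an integrable real random variable with CDF F such that F(t) ≥ G_{x,ℓ}(t) for all t ∈ ℝ. Then E[X] ≤ s − Σ_{i=1}^n ℓ_{(i)}(x_{(i+1)} − x_{(i)}); that is, the mean of F is at most the mean of the stairstep CDF G_{x,ℓ}. -/
/-! If `x_(1) ≤ … ≤ x_(n) ≤ x_(n+1) = s` and `y ≤ s`, the gaps `x_(i+1) - x_(i)` with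
`y ≤ x_(i)` telescope to at most `s - y`. Since `F(s) ≥ G(s) = 1`, this applies to `y = X`
almost surely, and integrating gives `∑ F(x_(i)) (x_(i+1) - x_(i)) ≤ s - E[X]`. Finally
`F(x_(i)) ≥ G(x_(i)) ≥ ℓ_(i)` whenever the gap is nonzero, i.e. whenever `x_(i) < s`. -/

open MeasureTheory Set

theorem Fin.sum_univ_succ_sub_castSucc {n : ℕ} (v : Fin (n + 1) → ℝ) :
    ∑ i : Fin n, (v i.succ - v i.castSucc) = v (Fin.last n) - v 0 := by
  have h₁ := Fin.sum_univ_succ v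
  have h₂ := Fin.sum_univ_castSucc v
  rw [Finset.sum_sub_distrib]
  linarith

theorem Fin.monotone_snoc {n : ℕ} {w : Fin n → ℝ} {s : ℝ} (hw : Monotone w)
    (hs : ∀ i, w i ≤ s) : Monotone (Fin.snoc w s : Fin (n + 1) → ℝ) := by
  intro a b hab
  induction b using Fin.lastCases with
  | last => induction a using Fin.lastCases <;> simp [hs]
  | cast j =>
    induction a using Fin.lastCases with
    | last => exact absurd hab (not_le.2 (Fin.castSucc_lt_last j))
    | cast i => simpa using hw (Fin.castSucc_le_castSucc_iff.1 hab)

theorem sum_indicator_Iic_succ_sub_castSucc_le {n : ℕ} {v : Fin (n + 1) → ℝ} (hv : Monotone v)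
    {y : ℝ} (hy : y ≤ v (Fin.last n)) :
    ∑ i : Fin n, (Iic (v i.castSucc)).indicator (fun _ => v i.succ - v i.castSucc) y
      ≤ v (Fin.last n) - y := by
  have hgap : ∀ i : Fin n, (Iic (v i.castSucc)).indicator (fun _ => v i.succ - v i.castSucc) y
      ≤ max (v i.succ) y - max (v i.castSucc) y := by
    intro i
    have hi := Fin.monotone_iff_le_succ.1 hv i
    by_cases h : y ≤ v i.castSucc
    · rw [indicator_of_mem (mem_Iic.2 h), max_eq_left h, max_eq_left (h.trans hi)]
    · rw [indicator_of_notMem (notMem_Iic.2 (not_le.1 h)), max_eq_right (not_le.1 h).le]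
      linarith [le_max_right (v i.succ) y]
  calc _ ≤ ∑ i : Fin n, (max (v i.succ) y - max (v i.castSucc) y) :=
        Finset.sum_le_sum fun i _ => hgap i
    _ = max (v (Fin.last n)) y - max (v 0) y :=
        Fin.sum_univ_succ_sub_castSucc fun i => max (v i) y
    _ ≤ v (Fin.last n) - y := by rw [max_eq_left hy]; linarith [le_max_right (v 0) y]

theorem integral_indicator_Iic_comp {Ω : Type*} [MeasurableSpace Ω] {μ : Measure Ω}
    [IsFiniteMeasure μ] {X : Ω → ℝ} (hX : AEMeasurable X μ) (a c : ℝ) :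
    ∫ ω, (Iic a).indicator (fun _ => c) (X ω) ∂μ = μ.real {ω | X ω ≤ a} * c := by
  change ∫ ω, {ω | X ω ≤ a}.indicator (fun _ => c) ω ∂μ = _
  rw [integral_indicator₀ (nullMeasurableSet_le hX aemeasurable_const), setIntegral_const,
    smul_eq_mul]

theorem sum_measureReal_mul_succ_sub_castSucc_le {n : ℕ} {Ω : Type*} [MeasurableSpace Ω]
    {μ : Measure Ω} [IsProbabilityMeasure μ] {v : Fin (n + 1) → ℝ} (hv : Monotone v) {X : Ω → ℝ}
    (hXi : Integrable X μ) (hX : ∀ᵐ ω ∂μ, X ω ≤ v (Fin.last n)) :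
    ∑ i : Fin n, μ.real {ω | X ω ≤ v i.castSucc} * (v i.succ - v i.castSucc)
      ≤ v (Fin.last n) - ∫ ω, X ω ∂μ := by
  have hint : ∀ i : Fin n, Integrable
      (fun ω => (Iic (v i.castSucc)).indicator (fun _ => v i.succ - v i.castSucc) (X ω)) μ :=
    fun i => .of_bound ((measurable_const.indicator measurableSet_Iic).comp_aemeasurable
      hXi.aemeasurable).aestronglyMeasurable ‖v i.succ - v i.castSucc‖
      (.of_forall fun _ => norm_indicator_le_norm_self _ _)
  calc _ = ∫ ω, ∑ i : Fin n,
        (Iic (v i.castSucc)).indicator (fun _ => v i.succ - v i.castSucc) (X ω) ∂μ := by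
        rw [integral_finsetSum _ fun i _ => hint i]
        simp only [integral_indicator_Iic_comp hXi.aemeasurable]
    _ ≤ ∫ ω, (v (Fin.last n) - X ω) ∂μ :=
        integral_mono_ae (integrable_finsetSum _ fun i _ => hint i)
          ((integrable_const _).sub hXi)
          (hX.mono fun _ hω => sum_indicator_Iic_succ_sub_castSucc_le hv hω)
    _ = v (Fin.last n) - ∫ ω, X ω ∂μ := by
        rw [integral_sub (integrable_const _) hXi, integral_const, probReal_univ, one_smul]

theorem stairstep_of_le {n : ℕ} {s t : ℝ} (x ℓ : Fin n → ℝ) (h : s ≤ t) :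
    stairstep s x ℓ t = 1 :=
  if_pos h

theorem sortedVec_le_stairstep_sortedVec {n : ℕ} {s : ℝ} {x : Fin n → ℝ} (ℓ : Fin n → ℝ)
    {i : Fin n} (h : sortedVec x i < s) :
    sortedVec ℓ i ≤ stairstep s x ℓ (sortedVec x i) := by
  rw [stairstep, if_neg h.not_ge]
  exact le_csSup ((finite_singleton 0).union ((toFinite _).image _)).bddAbove
    (Or.inr ⟨i, le_refl (sortedVec x i), rfl⟩)

theorem ae_le_of_one_le_measureReal {Ω : Type*} [MeasurableSpace Ω] {μ : Measure Ω}
    [IsProbabilityMeasure μ] {X : Ω → ℝ} (hX : AEMeasurable X μ) {s : ℝ}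
    (h : 1 ≤ μ.real {ω | X ω ≤ s}) : ∀ᵐ ω ∂μ, X ω ≤ s := by
  rw [ae_iff_measure_eq (nullMeasurableSet_le hX aemeasurable_const), measure_univ]
  refine le_antisymm prob_le_one ?_
  rw [← ENNReal.ofReal_one]
  exact ENNReal.ofReal_le_of_le_toReal h

theorem stmt2_general {n : ℕ} {Ω : Type*} [MeasurableSpace Ω] (μ : Measure Ω)
    [IsProbabilityMeasure μ] (s : ℝ) (x ℓ : Fin n → ℝ)
    (hx : ∀ i, x i ≤ s)
    (X : Ω → ℝ) (hXi : Integrable X μ)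
    (hdom : ∀ t : ℝ, stairstep s x ℓ t ≤ (μ {ω | X ω ≤ t}).toReal) :
    ∫ ω, X ω ∂μ ≤ inducedMean s x ℓ := by
  set v : Fin (n + 1) → ℝ := Fin.snoc (sortedVec x) s
  have hv : Monotone v := Fin.monotone_snoc (Tuple.monotone_sort x) fun i => hx _
  have hXs : ∀ᵐ ω ∂μ, X ω ≤ s := ae_le_of_one_le_measureReal hXi.aemeasurable
    ((stairstep_of_le x ℓ le_rfl).symm.trans_le (hdom s))
  have hmean := sum_measureReal_mul_succ_sub_castSucc_le hv hXi (by simpa [v] using hXs)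
  simp only [v, Fin.snoc_castSucc, Fin.snoc_last] at hmean
  have hterm : ∀ i : Fin n, sortedVec ℓ i * (v i.succ - sortedVec x i)
      ≤ μ.real {ω | X ω ≤ sortedVec x i} * (v i.succ - sortedVec x i) := by
    intro i
    have hgap : sortedVec x i ≤ v i.succ := by
      simpa [v] using Fin.monotone_iff_le_succ.1 hv i
    by_cases h : sortedVec x i < s
    · exact mul_le_mul_of_nonneg_right
        ((sortedVec_le_stairstep_sortedVec ℓ h).trans (hdom _)) (sub_nonneg.2 hgap)
    · have htop : v i.succ ≤ s := by simpa [v] using hv (Fin.le_last i.succ)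
      rw [show v i.succ - sortedVec x i = 0 by linarith [not_lt.1 h], mul_zero, mul_zero]
  have hsum := Finset.sum_le_sum fun i (_ : i ∈ Finset.univ) => hterm i
  rw [inducedMean]
  linarith

/-- if the CDF of an integrable random variable `X` dominates the
stairstep CDF `G_{x,ℓ}` everywhere, then `E[X]` is at most the mean of `G_{x,ℓ}`,
which equals the induced mean `s - ∑ ℓ_{(i)}(x_{(i+1)} - x_{(i)})`. -/
theorem stmt2 {n : ℕ} {Ω : Type*} [MeasurableSpace Ω] (μ : Measure Ω)
    [IsProbabilityMeasure μ] (s : ℝ) (x ℓ : Fin n → ℝ)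
    (hx : ∀ i, x i ≤ s) (hℓ : ∀ i, ℓ i ∈ Set.Icc (0:ℝ) 1)
    (X : Ω → ℝ) (hXm : Measurable X) (hXi : Integrable X μ)
    (hdom : ∀ t : ℝ, stairstep s x ℓ t ≤ (μ {ω | X ω ≤ t}).toReal) :
    ∫ ω, X ω ∂μ ≤ inducedMean s x ℓ :=
  stmt2_general μ s x ℓ hx X hXi hdom
end

section
/- Let D⁺ ⊆ ℝ be a nondegenerate interval with finite supremum s, let ℓ ∈ [0,1]ⁿ and α ∈ (0,1). Suppose that for every Borel probability measure ν supported on D⁺ with CDF F, taking X = (X_1,…,X_n) i.i.d. with law ν, one has P( F(t) ≥ G_{X,ℓ}(t) for all t ∈ ℝ ) ≥ 1 − α. Then, with U = (U_1,…,U_n) i.i.d. Uniform(0,1) and order statistics U_{(1)} ≤ … ≤ U_{(n)}: P( U_{(i)} ≥ ℓ_{(i)} for all 1 ≤ i ≤ n ) ≥ 1 − α. -/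
/-!
Apply the hypothesis to the uniform law `ν` on `[a, sup D⁺]`, the image of Uniform(0,1) under
the increasing affine map `e v = a + (sup D⁺ - a) v`. Its CDF satisfies `F (e v) = v`, and
`e ∘ U` is an i.i.d. sample from `ν` whose order statistics are `e (U_{(i)})`. Almost surely
every `U_i < 1`, so `e (U_{(i)}) < sup D⁺` and evaluating `G_{e ∘ U, ℓ} ≤ F` at
`t = e (U_{(i)})` gives `ℓ_{(i)} ≤ U_{(i)}`.
-/

open MeasureTheory Set

instance inst_s9 : IsProbabilityMeasure unif01 :=
  ⟨by rw [unif01, Measure.restrict_apply_univ, Real.volume_Icc, sub_zero, ENNReal.ofReal_one]⟩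

theorem unif01_Iic {v : ℝ} (hv : v ∈ Icc (0 : ℝ) 1) : unif01 (Iic v) = ENNReal.ofReal v := by
  have h : Iic v ∩ Icc 0 1 = Icc 0 v :=
    ext fun w => ⟨fun ⟨h1, h2, _⟩ => ⟨h2, h1⟩, fun ⟨h1, h2⟩ => ⟨h2, h1, h2.trans hv.2⟩⟩
  rw [unif01, Measure.restrict_apply' measurableSet_Icc, h, Real.volume_Icc, sub_zero]

theorem ae_unif01_mem_Ico : ∀ᵐ v ∂unif01, v ∈ Ico (0 : ℝ) 1 := by
  rw [unif01, ae_restrict_iff' measurableSet_Icc]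
  filter_upwards [Measure.ae_ne volume 1] with v hv1 hv
  exact ⟨hv.1, hv.2.lt_of_ne hv1⟩

theorem ae_unifPi_mem_Ico (n : ℕ) : ∀ᵐ u ∂unifPi n, ∀ i, u i ∈ Ico (0 : ℝ) 1 :=
  Measure.ae_pi_le_pi (Filter.eventually_pi fun _ => ae_unif01_mem_Ico)

theorem map_unif01_Iic {e : ℝ ≃ᵐ ℝ} (he : StrictMono e) {v : ℝ} (hv : v ∈ Icc (0 : ℝ) 1) :
    unif01.map e (Iic (e v)) = ENNReal.ofReal v := by
  rw [e.map_apply, ← unif01_Iic hv]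
  congr 1
  ext w
  exact he.le_iff_le

theorem sortedVec_comp_of_monotone {n : ℕ} {φ : ℝ → ℝ} (hφ : Monotone φ) (u : Fin n → ℝ) :
    sortedVec (φ ∘ u) = φ ∘ sortedVec u := by
  have h : (φ ∘ u) ∘ Tuple.sort u = (φ ∘ u) ∘ Tuple.sort (φ ∘ u) :=
    Tuple.comp_sort_eq_comp_iff_monotone.mpr (hφ.comp (Tuple.monotone_sort u))
  rw [sortedVec, sortedVec, ← h]
  rfl

theorem sortedVec_le_stairstep {n : ℕ} {s t : ℝ} {x : Fin n → ℝ} (ℓ : Fin n → ℝ) (ht : t < s)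
    {i : Fin n} (hi : sortedVec x i ≤ t) : sortedVec ℓ i ≤ stairstep s x ℓ t := by
  rw [stairstep, if_neg ht.not_ge]
  exact le_csSup ((finite_singleton 0).union ((toFinite _).image _)).bddAbove (Or.inr ⟨i, hi, rfl⟩)

theorem sortedVec_le_of_stairstep_le {n : ℕ} {s : ℝ} {ℓ u : Fin n → ℝ} {φ F : ℝ → ℝ}
    (hφ : Monotone φ) (hu : ∀ i, φ (u i) < s) (hF : ∀ i, F (φ (u i)) = u i)
    (h : ∀ t, stairstep s (φ ∘ u) ℓ t ≤ F t) (i : Fin n) : sortedVec ℓ i ≤ sortedVec u i := by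
  have hi : sortedVec (φ ∘ u) i ≤ φ (sortedVec u i) := by
    rw [sortedVec_comp_of_monotone hφ]; rfl
  calc sortedVec ℓ i ≤ stairstep s (φ ∘ u) ℓ (φ (sortedVec u i)) :=
        sortedVec_le_stairstep ℓ (hu _) hi
    _ ≤ F (φ (sortedVec u i)) := h _
    _ = sortedVec u i := hF _

theorem pi_stairstep_le_cdf_le_unifPi_sortedVec_le {n : ℕ} (s : ℝ) (ℓ : Fin n → ℝ) {e : ℝ ≃ᵐ ℝ}
    (he : StrictMono e) (hes : ∀ v < 1, e v < s) :
    (Measure.pi fun _ : Fin n => unif01.map e)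
        {x | ∀ t : ℝ, stairstep s x ℓ t ≤ (unif01.map e (Iic t)).toReal}
      ≤ unifPi n {u | ∀ i : Fin n, sortedVec ℓ i ≤ sortedVec u i} := by
  set E : (Fin n → ℝ) ≃ᵐ (Fin n → ℝ) := MeasurableEquiv.piCongrRight fun _ => e
  have hpi : (Measure.pi fun _ : Fin n => unif01.map e) = (unifPi n).map E :=
    (Measure.pi_map_pi fun _ => e.measurable.aemeasurable).symm
  rw [hpi, E.map_apply]
  refine measure_mono_ae ?_
  filter_upwards [ae_unifPi_mem_Ico n] with u hu huE
  refine sortedVec_le_of_stairstep_le he.monotone (fun i => hes _ (hu i).2) (fun i => ?_) huE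
  rw [map_unif01_Iic he (Ico_subset_Icc_self (hu i)), ENNReal.toReal_ofReal (hu i).1]

theorem Set.OrdConnected.Ico_csSup_subset {α : Type*} [ConditionallyCompleteLinearOrder α]
    {D : Set α} (hD : D.OrdConnected) {a : α} (ha : a ∈ D) : Ico a (sSup D) ⊆ D := fun _ ht =>
  let ⟨_, hp, htp⟩ := exists_lt_of_lt_csSup ⟨a, ha⟩ ht.2
  hD.out ha hp ⟨ht.1, htp.le⟩

theorem stmt9_general {n : ℕ} (Dp : Set ℝ) (hconn : Dp.OrdConnected)
    (hnondeg : ∃ a ∈ Dp, ∃ b ∈ Dp, a < b) (hbdd : BddAbove Dp)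
    (ℓ : Fin n → ℝ)
    (α : ℝ)
    (hlcb : ∀ (ν : Measure ℝ) [IsProbabilityMeasure ν], (∀ᵐ t ∂ν, t ∈ Dp) →
      ENNReal.ofReal (1 - α)
        ≤ (Measure.pi fun _ : Fin n => ν)
            {x | ∀ t : ℝ, stairstep (sSup Dp) x ℓ t ≤ (ν (Set.Iic t)).toReal}) :
    ENNReal.ofReal (1 - α)
      ≤ unifPi n {u | ∀ i : Fin n, sortedVec ℓ i ≤ sortedVec u i} := by
  obtain ⟨a, ha, b, hb, hab⟩ := hnondeg
  have hlen : 0 < sSup Dp - a := sub_pos.2 (hab.trans_le (le_csSup hbdd hb))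
  set e : ℝ ≃ᵐ ℝ := (MeasurableEquiv.mulLeft₀ _ hlen.ne').trans (MeasurableEquiv.addLeft a)
  have he_apply (v : ℝ) : e v = a + (sSup Dp - a) * v := rfl
  have he : StrictMono e := fun v w hvw => by
    simpa only [he_apply, add_lt_add_iff_left] using mul_lt_mul_of_pos_left hvw hlen
  have hes : ∀ v < 1, e v < sSup Dp := fun v hv => by
    rw [he_apply]; nlinarith
  have hsupp : ∀ᵐ t ∂unif01.map e, t ∈ Dp := by
    rw [e.measurableEmbedding.ae_map_iff]
    filter_upwards [ae_unif01_mem_Ico] with v hv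
    refine hconn.Ico_csSup_subset ha ⟨?_, hes v hv.2⟩
    rw [he_apply]; nlinarith [hv.1]
  have := Measure.isProbabilityMeasure_map (μ := unif01) e.measurable.aemeasurable
  exact (hlcb _ hsupp).trans (pi_stairstep_le_cdf_le_unifPi_sortedVec_le _ ℓ he hes)

/-- if `G_{X,ℓ}` is a `(1-α)` lower confidence bound for the CDF of
every distribution supported on a nondegenerate interval `D⁺` with finite
supremum, then `P(∀ i, U_{(i)} ≥ ℓ_{(i)}) ≥ 1 - α` for i.i.d. Uniform(0,1)
order statistics. -/
theorem stmt9 {n : ℕ} (Dp : Set ℝ) (hconn : Dp.OrdConnected)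
    (hnondeg : ∃ a ∈ Dp, ∃ b ∈ Dp, a < b) (hbdd : BddAbove Dp)
    (ℓ : Fin n → ℝ) (hℓ : ∀ i, ℓ i ∈ Set.Icc (0:ℝ) 1)
    (α : ℝ) (hα : α ∈ Set.Ioo (0:ℝ) 1)
    (hlcb : ∀ (ν : Measure ℝ) [IsProbabilityMeasure ν], (∀ᵐ t ∂ν, t ∈ Dp) →
      ENNReal.ofReal (1 - α)
        ≤ (Measure.pi fun _ : Fin n => ν)
            {x | ∀ t : ℝ, stairstep (sSup Dp) x ℓ t ≤ (ν (Set.Iic t)).toReal}) :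
    ENNReal.ofReal (1 - α)
      ≤ unifPi n {u | ∀ i : Fin n, sortedVec ℓ i ≤ sortedVec u i} :=
  stmt9_general Dp hconn hnondeg hbdd ℓ α hlcb
end
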